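/- arXiv:2312.03593 — 3 statements merged into one kernel-verified Lean document; each statement's English description precedes it below -/
import Mathlib

section
/- (Lemma 3(a)) Let g : (k+1)^𝒳 → ℝ≥0 be a monotone normalized k-submodular function, let 𝟎 = x⁰ ⊑ x¹ ⊑ … ⊑ xᵐ be a greedy chain for g, and let v be any k-set. With vᵖ = (v ⊔ xᵖ) ⊔ xᵖ, one has g(v) − g(vᵐ) ≤ g(xᵐ). -/
/-- A `k`-set: an assignment of each ground element to one of `k` parts or to none
(`none` meaning the element belongs to no part).  This encodes a tuple
`(S_1, …, S_k)` of pairwise disjoint subsets of `X`. -/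
abbrev KSet (X : Type*) (k : ℕ) := X → Option (Fin k)

namespace KSet

variable {X : Type*} {k : ℕ}

/-- The empty `k`-set `𝟎 = (∅, …, ∅)`. -/
def bot (X : Type*) (k : ℕ) : KSet X k := fun _ => none

/-- `le s t` is the partial order `s ⊑ t`, i.e. `Sᵢ ⊆ Tᵢ` for every `i ∈ [k]`. -/
def le (s t : KSet X k) : Prop := ∀ (x : X) (i : Fin k), s x = some i → t x = some i

/-- The meet `s ⊓ t`, whose `i`-th component is `Sᵢ ∩ Tᵢ`. -/
def meet (s t : KSet X k) : KSet X k := fun x => if s x = t x then s x else none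

/-- The join `s ⊔ t`, whose `i`-th component is `(Sᵢ ∪ Tᵢ) \ ⋃_{j ≠ i} (Sⱼ ∪ Tⱼ)`. -/
def join (s t : KSet X k) : KSet X k := fun x =>
  match s x, t x with
  | none, b => b
  | some i, none => some i
  | some i, some j => if i = j then some i else none

/-- The `k`-set `(x, i)` whose only nonempty component is `Sᵢ = {x}`. -/
def single [DecidableEq X] (x : X) (i : Fin k) : KSet X k :=
  fun y => if y = x then some i else none

/-- `s ⊔ (x, i)`: add the element `x` to the `i`-th part of `s`
(intended for `x ∉ E(s)`). -/
def add [DecidableEq X] (s : KSet X k) (x : X) (i : Fin k) : KSet X k :=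
  Function.update s x (some i)

end KSet

/-- The marginal gain `Δ_{x,i} g (s) = g (s ⊔ (x,i)) - g s`. -/
def marg {X : Type*} [DecidableEq X] {k : ℕ} (g : KSet X k → ℝ) (s : KSet X k)
    (x : X) (i : Fin k) : ℝ :=
  g (KSet.add s x i) - g s

/-- `g` is `k`-submodular: `g (s ⊓ t) + g (s ⊔ t) ≤ g s + g t` for all `k`-sets. -/
def KSubmodular {X : Type*} {k : ℕ} (g : KSet X k → ℝ) : Prop :=
  ∀ s t : KSet X k, g (KSet.meet s t) + g (KSet.join s t) ≤ g s + g t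

/-- `g` is monotone with respect to `⊑`. -/
def KMonotone {X : Type*} {k : ℕ} (g : KSet X k → ℝ) : Prop :=
  ∀ s t : KSet X k, KSet.le s t → g s ≤ g t

/-- The weight `w(s) = ∑_{x ∈ E(s)} w x` of a `k`-set. -/
def wtot {X : Type*} [Fintype X] {k : ℕ} (w : X → ℝ) (s : KSet X k) : ℝ :=
  ∑ x ∈ Finset.univ.filter (fun x => s x ≠ none), w x

/-- A greedy chain for `g`: `c 0 = 𝟎` and each step adds one new element at a
position maximizing the marginal gain over `i ∈ [k]`. -/
def GreedyChain {X : Type*} [DecidableEq X] {k : ℕ} (g : KSet X k → ℝ) (m : ℕ)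
    (c : ℕ → KSet X k) : Prop :=
  c 0 = KSet.bot X k ∧
  ∀ p, p < m → ∃ (xp : X) (ip : Fin k),
    c p xp = none ∧
    c (p + 1) = KSet.add (c p) xp ip ∧
    ∀ i : Fin k, marg g (c p) xp i ≤ marg g (c p) xp ip

/-!
Write `vᵖ = (v ⊔ xᵖ) ⊔ xᵖ`: it is `v` overwritten by `xᵖ`, so `v⁰ = v` and `vᵖ⁺¹` is `vᵖ` with
the new greedy element `x_p` moved to position `i_p`. It suffices that each such move loses at
most the greedy gain `g(xᵖ⁺¹) - g(xᵖ)`, and then to telescope. If `x_p` lies in `vᵖ`, say at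
position `j`, compare with `u = vᵖ` minus `x_p`, which still contains `xᵖ`: by diminishing
returns and greediness the loss is at most `Δ_{x_p,j} g(u) ≤ Δ_{x_p,j} g(xᵖ) ≤ Δ_{x_p,i_p} g(xᵖ)`.
-/

namespace KSet

variable {X : Type*} {k : ℕ}

lemma eq_none_of_le {s t : KSet X k} (hst : s.le t) {x : X} (hx : t x = none) : s x = none := by
  cases hs : s x with
  | none => rfl
  | some j => simp [hst x j hs] at hx

lemma le_add_of_eq_none [DecidableEq X] {s : KSet X k} {x : X} (hx : s x = none) (i : Fin k) :
    s.le (s.add x i) := by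
  intro y j hy
  have hne : y ≠ x := by rintro rfl; simp [hx] at hy
  simpa [add, Function.update_of_ne hne] using hy

lemma meet_add_of_le [DecidableEq X] {s t : KSet X k} (hst : s.le t) {x : X} (hx : t x = none)
    (i : Fin k) : (s.add x i).meet t = s := by
  funext y
  rcases eq_or_ne y x with rfl | hne
  · simp [meet, add, hx, eq_none_of_le hst hx]
  · cases hs : s y with
    | none => cases t y <;> simp [meet, add, Function.update_of_ne hne, hs]
    | some j => simp [meet, add, Function.update_of_ne hne, hs, hst y j hs]

lemma join_add_of_le [DecidableEq X] {s t : KSet X k} (hst : s.le t) {x : X} (hx : t x = none)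
    (i : Fin k) : (s.add x i).join t = t.add x i := by
  funext y
  rcases eq_or_ne y x with rfl | hne
  · simp [join, add, hx]
  · cases hs : s y with
    | none => cases t y <;> simp [join, add, Function.update_of_ne hne, hs]
    | some j => simp [join, add, Function.update_of_ne hne, hs, hst y j hs]

lemma join_join_self_apply (v s : KSet X k) (x : X) : (v.join s).join s x = (s x).or (v x) := by
  unfold join
  cases hs : s x with
  | none => cases v x <;> rfl
  | some j =>
    cases hv : v x with
    | none => simp
    | some i => by_cases hij : i = j <;> simp [hij]

lemma join_join_bot (v : KSet X k) : (v.join (bot X k)).join (bot X k) = v := by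
  funext x
  simp [join_join_self_apply, bot]

lemma join_join_add [DecidableEq X] (v s : KSet X k) (x : X) (i : Fin k) :
    (v.join (s.add x i)).join (s.add x i) = ((v.join s).join s).add x i := by
  funext y
  rcases eq_or_ne y x with rfl | hne
  · simp [join_join_self_apply, add]
  · simp [join_join_self_apply, add, Function.update_of_ne hne]

lemma le_join_join_self (v s : KSet X k) : s.le ((v.join s).join s) := by
  intro x i hx
  simp [join_join_self_apply, hx]

end KSet

section Marginals

variable {X : Type*} [DecidableEq X] {k : ℕ} {g : KSet X k → ℝ}

lemma KMonotone.marg_nonneg (hmono : KMonotone g) {s : KSet X k} {x : X} (hx : s x = none)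
    (i : Fin k) : 0 ≤ marg g s x i :=
  sub_nonneg.2 (hmono _ _ (KSet.le_add_of_eq_none hx i))

lemma KSubmodular.marg_le_marg_of_le (hsub : KSubmodular g) {s t : KSet X k} (hst : s.le t)
    {x : X} (hx : t x = none) (i : Fin k) : marg g t x i ≤ marg g s x i := by
  have h := hsub (s.add x i) t
  rw [KSet.meet_add_of_le hst hx, KSet.join_add_of_le hst hx] at h
  unfold marg
  linarith

lemma KSubmodular.sub_le_marg_of_forall_marg_le (hsub : KSubmodular g) (hmono : KMonotone g)
    {s w : KSet X k} (hsw : s.le w) {x : X} (hx : s x = none) {i : Fin k}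
    (hi : ∀ j, marg g s x j ≤ marg g s x i) : g w - g (w.add x i) ≤ marg g s x i := by
  cases hw : w x with
  | none =>
    have hle : g w ≤ g (w.add x i) := hmono _ _ (KSet.le_add_of_eq_none hw i)
    linarith [hmono.marg_nonneg hx i]
  | some j =>
    set u : KSet X k := Function.update w x none
    have hu : u x = none := Function.update_self _ _ _
    have hsu : s.le u := by
      intro y l hy
      have hne : y ≠ x := by rintro rfl; simp [hx] at hy
      simpa [u, Function.update_of_ne hne] using hsw y l hy
    have hw_eq : w = u.add x j := by simp [u, KSet.add, ← hw]
    have hwi_eq : w.add x i = u.add x i := by simp [u, KSet.add]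
    calc g w - g (w.add x i) = marg g u x j - marg g u x i := by
          rw [hwi_eq, hw_eq]; simp only [marg]; ring
      _ ≤ marg g u x j := by linarith [hmono.marg_nonneg hu i]
      _ ≤ marg g s x j := hsub.marg_le_marg_of_le hsu hu j
      _ ≤ marg g s x i := hi j

end Marginals

theorem lemma3a_general {X : Type*} [DecidableEq X] {k : ℕ}
    (g : KSet X k → ℝ) (hsub : KSubmodular g)
    (hmono : KMonotone g) (hnorm : g (KSet.bot X k) = 0)
    (m : ℕ) (c : ℕ → KSet X k) (hc : GreedyChain g m c) (v : KSet X k) :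
    g v - g (KSet.join (KSet.join v (c m)) (c m)) ≤ g (c m) := by
  obtain ⟨hc0, hstep⟩ := hc
  let f : ℕ → ℝ := fun p => g ((v.join (c p)).join (c p)) + g (c p)
  have hf : MonotoneOn f (Set.Iic m) := by
    refine monotoneOn_of_le_succ Set.ordConnected_Iic fun p _ _ hp => ?_
    rw [Order.succ_eq_add_one] at hp ⊢
    obtain ⟨x, i, hx, hadd, hi⟩ := hstep p hp
    have hloss := hsub.sub_le_marg_of_forall_marg_le hmono (KSet.le_join_join_self v (c p)) hx hi
    simp only [f, hadd, KSet.join_join_add]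
    simp only [marg] at hloss
    linarith
  have := hf (Set.mem_Iic.2 m.zero_le) (Set.mem_Iic.2 le_rfl) m.zero_le
  simp only [f, hc0, KSet.join_join_bot, hnorm] at this
  linarith

/-- **Lemma 3(a).** For a monotone normalized `k`-submodular `g`,
a greedy chain `𝟎 = x⁰ ⊑ … ⊑ xᵐ` and any `k`-set `v`, setting
`vᵐ = (v ⊔ xᵐ) ⊔ xᵐ`, one has `g v - g vᵐ ≤ g xᵐ`. -/
theorem lemma3a {X : Type*} [DecidableEq X] {k : ℕ}
    (g : KSet X k → ℝ) (hnn : ∀ s : KSet X k, 0 ≤ g s) (hsub : KSubmodular g)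
    (hmono : KMonotone g) (hnorm : g (KSet.bot X k) = 0)
    (m : ℕ) (c : ℕ → KSet X k) (hc : GreedyChain g m c) (v : KSet X k) :
    g v - g (KSet.join (KSet.join v (c m)) (c m)) ≤ g (c m) :=
  lemma3a_general g hsub hmono hnorm m c hc v
end

section
/- (Lemma 4, non-monotone case) Let k ≥ 2, let g : (k+1)^𝒳 → ℝ≥0 be a normalized k-submodular function (not necessarily monotone), w : 𝒳 → ℝ≥0 with w(x) > 0 for all x ∈ 𝒳, ε ∈ (0,1], τ > 0 and W > 0, and let v be a k-set with g(v) ≥ τ and w(v) ≤ W. Set θ = ετ/W and A = ((4−ε)/(3ε))·W. Assume 𝒳 contains no big element, i.e., every x ∈ 𝒳 with w(x) ≤ A satisfies max_{i∈[k]} g((x,i)) < τ. Let 𝟎 = x⁰ ⊑ x¹ ⊑ … ⊑ xᵐ = 𝐱 be a greedy chain for g in which every added pair satisfies Δ_{x_p,i_p}g(xᵖ⁻¹) ≥ θ·w(x_p), and suppose that for every y ∈ E(v) ∖ E(𝐱) there is an index p_y ∈ {0,…,m} such that either max_{i∈[k]} Δ_{y,i}g(x^{p_y}) < θ·w(y),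 or both max_{i∈[k]} Δ_{y,i}g(x^{p_y}) ≥ θ·w(y) and w(x^{p_y}) + w(y) > A. Then g(𝐱) ≥ (1−ε)τ/3. -/
namespace KSet

variable {X : Type*} {k : ℕ}

def overlay (s t : KSet X k) : KSet X k := fun y => (s y).or (t y)

theorem le_overlay (s t : KSet X k) : le s (overlay s t) := by
  intro y i h
  simp [overlay, h]

@[simp]
theorem bot_overlay (t : KSet X k) : overlay (bot X k) t = t := rfl

variable [DecidableEq X]

@[simp]
theorem add_apply_self (s : KSet X k) (x : X) (i : Fin k) : add s x i x = some i :=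
  Function.update_self _ _ _

theorem add_apply_of_ne {s : KSet X k} {x y : X} (i : Fin k) (h : y ≠ x) : add s x i y = s y :=
  Function.update_of_ne h _ _

theorem le_add {s : KSet X k} {x : X} (hx : s x = none) (i : Fin k) : le s (add s x i) := by
  intro y j hy
  rwa [add_apply_of_ne i (by rintro rfl; simp [hx] at hy)]

theorem le_update_none {s t : KSet X k} {x : X} (hs : s x = none) (hst : le s t) :
    le s (Function.update t x none) := by
  intro y j hy
  rw [Function.update_of_ne (by rintro rfl; simp [hs] at hy)]
  exact hst y j hy

theorem add_update_none (t : KSet X k) (x : X) (i : Fin k) :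
    add (Function.update t x none) x i = Function.update t x (some i) :=
  Function.update_idem _ _ _

theorem overlay_add (s t : KSet X k) (x : X) (i : Fin k) :
    overlay (add s x i) t = Function.update (overlay s t) x (some i) := by
  funext y
  rcases eq_or_ne y x with rfl | hy
  · simp [overlay]
  · simp [overlay, add_apply_of_ne i hy, hy]

end KSet

section Weight

variable {X : Type*} [Fintype X] {k : ℕ} (w : X → ℝ)

@[simp]
theorem wtot_bot : wtot w (KSet.bot X k) = 0 := by
  simp [wtot, KSet.bot]

theorem wtot_add [DecidableEq X] {s : KSet X k} {x : X} (hx : s x = none) (i : Fin k) :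
    wtot w (KSet.add s x i) = wtot w s + w x := by
  have hsupp : Finset.univ.filter (fun y => KSet.add s x i y ≠ none)
      = insert x (Finset.univ.filter (fun y => s y ≠ none)) := by
    ext y
    rcases eq_or_ne y x with rfl | hy
    · simp
    · simp [KSet.add_apply_of_ne i hy, hy]
  rw [wtot, hsupp, Finset.sum_insert (by simp [hx]), wtot, add_comm]

variable {w}

theorem sum_le_wtot (hw : ∀ x, 0 ≤ w x) {v : KSet X k} {S : Finset X}
    (hS : ∀ y ∈ S, v y ≠ none) : ∑ y ∈ S, w y ≤ wtot w v :=
  Finset.sum_le_sum_of_subset_of_nonneg (fun y hy => by simpa using hS y hy)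
    (fun x _ _ => hw x)

end Weight

namespace KSubmodular

variable {X : Type*} [DecidableEq X] {k : ℕ} {g : KSet X k → ℝ}

theorem marg_add_marg_nonneg (hg : KSubmodular g) {s : KSet X k} {x : X} (hx : s x = none)
    {i j : Fin k} (hij : i ≠ j) : 0 ≤ marg g s x i + marg g s x j := by
  have hmeet : KSet.meet (KSet.add s x i) (KSet.add s x j) = s := by
    funext y
    rcases eq_or_ne y x with rfl | hy
    · simp [KSet.meet, hx, hij]
    · simp [KSet.meet, KSet.add_apply_of_ne _ hy]
  have hjoin : KSet.join (KSet.add s x i) (KSet.add s x j) = s := by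
    funext y
    rcases eq_or_ne y x with rfl | hy
    · simp [KSet.join, hx, hij]
    · rw [KSet.join, KSet.add_apply_of_ne _ hy, KSet.add_apply_of_ne _ hy]
      cases s y <;> simp
  have h := hg (KSet.add s x i) (KSet.add s x j)
  rw [hmeet, hjoin] at h
  simp only [marg]
  linarith

theorem marg_le_marg_of_le_s13 (hg : KSubmodular g) {s t : KSet X k} (hst : KSet.le s t) {x : X}
    (ht : t x = none) (i : Fin k) : marg g t x i ≤ marg g s x i := by
  have hs : s x = none := by
    cases hsx : s x with
    | none => rfl
    | some a => simp [hst x a hsx] at ht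
  have hmeet : KSet.meet (KSet.add s x i) t = s := by
    funext y
    rcases eq_or_ne y x with rfl | hy
    · simp [KSet.meet, ht, hs]
    · rw [KSet.meet, KSet.add_apply_of_ne _ hy]
      cases hsy : s y with
      | none => cases t y <;> simp
      | some a => simp [hst y a hsy]
  have hjoin : KSet.join (KSet.add s x i) t = KSet.add t x i := by
    funext y
    rcases eq_or_ne y x with rfl | hy
    · simp [KSet.join, ht]
    · rw [KSet.join, KSet.add_apply_of_ne _ hy, KSet.add_apply_of_ne _ hy]
      cases hsy : s y with
      | none => cases t y <;> simp
      | some a => simp [hst y a hsy]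
  have h := hg (KSet.add s x i) t
  rw [hmeet, hjoin] at h
  simp only [marg]
  linarith

/-- Pairwise monotonicity at `t` with `x` removed, then orthant submodularity down to `s`. -/
theorem le_update_add_two_mul_marg (hg : KSubmodular g) (hk : 2 ≤ k) {s t : KSet X k} {x : X}
    {i : Fin k} (hs : s x = none) (hst : KSet.le s t)
    (hmax : ∀ j, marg g s x j ≤ marg g s x i) (hpos : 0 ≤ marg g s x i) :
    g t ≤ g (Function.update t x (some i)) + 2 * marg g s x i := by
  have hsr : KSet.le s (Function.update t x none) := KSet.le_update_none hs hst
  have hr : Function.update t x none x = none := Function.update_self _ _ _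
  rw [← KSet.add_update_none]
  cases htx : t x with
  | none =>
    have : Nontrivial (Fin k) := Fin.nontrivial_iff_two_le.mpr hk
    obtain ⟨j, hji⟩ := exists_ne i
    have hrt : Function.update t x none = t := by rw [← htx]; exact Function.update_eq_self x t
    rw [hrt] at hsr hr ⊢
    have hpair := hg.marg_add_marg_nonneg hr hji.symm
    have hanti := hg.marg_le_marg_of_le_s13 hsr hr j
    have := hmax j
    simp only [marg] at *
    linarith
  | some i' =>
    have hrt := congrArg g (KSet.add_update_none t x i')
    rw [← htx, Function.update_eq_self] at hrt
    rcases eq_or_ne i' i with rfl | hi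
    · linarith
    · have hpair := hg.marg_add_marg_nonneg hr hi
      have hanti := hg.marg_le_marg_of_le_s13 hsr hr i'
      have := hmax i'
      simp only [marg] at *
      linarith

theorem le_piecewise_add_sum (hg : KSubmodular g) {s v : KSet X k} {b : X → ℝ} (S : Finset X)
    (hS : ∀ y ∈ S, s y = none ∧ v y ≠ none) (hb : ∀ y ∈ S, ∀ i, marg g s y i ≤ b y) :
    g (S.piecewise v s) ≤ g s + ∑ y ∈ S, b y := by
  induction S using Finset.induction_on with
  | empty => simp
  | @insert a S ha ih =>
    obtain ⟨hsa, hva⟩ := hS a (Finset.mem_insert_self a S)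
    obtain ⟨ia, hia⟩ := Option.ne_none_iff_exists'.mp hva
    have hle : KSet.le s (S.piecewise v s) := by
      intro y j hy
      rwa [Finset.piecewise_eq_of_notMem]
      exact fun hyS => by simp [(hS y (Finset.mem_insert_of_mem hyS)).1] at hy
    have hpa : S.piecewise v s a = none := by simp [ha, hsa]
    have hstep : (insert a S).piecewise v s = KSet.add (S.piecewise v s) a ia := by
      rw [Finset.piecewise_insert, hia]; rfl
    have hanti := hg.marg_le_marg_of_le_s13 hle hpa ia
    have hba := hb a (Finset.mem_insert_self a S) ia
    have ihS := ih (fun y hy => hS y (Finset.mem_insert_of_mem hy))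
      (fun y hy => hb y (Finset.mem_insert_of_mem hy))
    rw [hstep, Finset.sum_insert ha]
    simp only [marg] at hanti hba
    linarith

theorem overlay_le_add_mul_wtot [Fintype X] (hg : KSubmodular g) {w : X → ℝ}
    (hw : ∀ x, 0 ≤ w x) {θ : ℝ} (hθ : 0 ≤ θ) {s v : KSet X k}
    (hgood : ∀ y, s y = none → v y ≠ none → ∀ i, marg g s y i ≤ θ * w y) :
    g (KSet.overlay s v) ≤ g s + θ * wtot w v := by
  set D := Finset.univ.filter (fun y => s y = none ∧ v y ≠ none)
  have hD : ∀ y ∈ D, s y = none ∧ v y ≠ none := fun y hy => (Finset.mem_filter.mp hy).2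
  have hpiece : D.piecewise v s = KSet.overlay s v := by
    funext y
    by_cases hy : y ∈ D
    · simp [Finset.piecewise_eq_of_mem _ _ _ hy, KSet.overlay, (hD y hy).1]
    · rw [Finset.piecewise_eq_of_notMem _ _ _ hy]
      cases hsy : s y with
      | none =>
        simp [D, hsy] at hy
        simp [KSet.overlay, hsy, hy]
      | some a => simp [KSet.overlay, hsy]
  have h := hg.le_piecewise_add_sum D hD (fun y hy => hgood y (hD y hy).1 (hD y hy).2)
  rw [hpiece, ← Finset.mul_sum] at h
  have := mul_le_mul_of_nonneg_left (sum_le_wtot hw fun y hy => (hD y hy).2) hθ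
  linarith

end KSubmodular

def ThresholdGreedySteps {X : Type*} [DecidableEq X] {k : ℕ} (g : KSet X k → ℝ) (w : X → ℝ)
    (θ : ℝ) (m : ℕ) (c : ℕ → KSet X k) : Prop :=
  ∀ p, p < m → ∃ (xp : X) (ip : Fin k),
    c p xp = none ∧ c (p + 1) = KSet.add (c p) xp ip ∧
      (∀ i : Fin k, marg g (c p) xp i ≤ marg g (c p) xp ip) ∧
      θ * w xp ≤ marg g (c p) xp ip

namespace ThresholdGreedySteps

variable {X : Type*} [DecidableEq X] {k : ℕ} {g : KSet X k → ℝ} {w : X → ℝ} {θ : ℝ} {m : ℕ}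
  {c : ℕ → KSet X k}

theorem le_of_le (hc : ThresholdGreedySteps g w θ m c) {p q : ℕ} (hpq : p ≤ q) (hq : q ≤ m) :
    KSet.le (c p) (c q) := by
  induction q, hpq using Nat.le_induction with
  | base => exact fun _ _ h => h
  | succ q _ ih =>
    obtain ⟨x, i, hx, hsucc, -⟩ := hc q (by omega)
    intro y j hy
    rw [hsucc]
    exact KSet.le_add hx i y j (ih (by omega) y j hy)

theorem mul_wtot_le [Fintype X] (hc : ThresholdGreedySteps g w θ m c)
    (h0 : c 0 = KSet.bot X k) (hnorm : g (KSet.bot X k) = 0) {p : ℕ} (hp : p ≤ m) :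
    θ * wtot w (c p) ≤ g (c p) := by
  induction p with
  | zero => simp [h0, hnorm]
  | succ p ih =>
    obtain ⟨x, i, hx, hsucc, -, hgain⟩ := hc p (by omega)
    have := ih (by omega)
    rw [hsucc, wtot_add w hx, mul_add]
    simp only [marg] at hgain
    linarith

theorem value_le_of_le (hc : ThresholdGreedySteps g w θ m c) (hθ : 0 ≤ θ) (hw : ∀ x, 0 ≤ w x)
    {p q : ℕ} (hpq : p ≤ q) (hq : q ≤ m) : g (c p) ≤ g (c q) := by
  induction q, hpq using Nat.le_induction with
  | base => exact le_rfl
  | succ q _ ih =>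
    obtain ⟨x, i, hx, hsucc, -, hgain⟩ := hc q (by omega)
    have := ih (by omega)
    have := mul_nonneg hθ (hw x)
    rw [hsucc]
    simp only [marg] at hgain
    linarith

theorem le_overlay_add_two_mul (hc : ThresholdGreedySteps g w θ m c) (hg : KSubmodular g)
    (hk : 2 ≤ k) (hθ : 0 ≤ θ) (hw : ∀ x, 0 ≤ w x) (v : KSet X k) {p : ℕ} (hp : p ≤ m) :
    g (KSet.overlay (c 0) v) + 2 * g (c 0) ≤ g (KSet.overlay (c p) v) + 2 * g (c p) := by
  induction p with
  | zero => exact le_rfl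
  | succ p ih =>
    obtain ⟨x, i, hx, hsucc, hmax, hgain⟩ := hc p (by omega)
    have hstep := hg.le_update_add_two_mul_marg hk hx (KSet.le_overlay (c p) v) hmax
      ((mul_nonneg hθ (hw x)).trans hgain)
    have := ih (by omega)
    rw [hsucc, KSet.overlay_add]
    simp only [marg] at hstep
    linarith

end ThresholdGreedySteps

theorem lemma4_nonmonotone_general {X : Type*} [Fintype X] [DecidableEq X] {k : ℕ} (hk : 2 ≤ k)
    (g : KSet X k → ℝ) (hsub : KSubmodular g)
    (hnorm : g (KSet.bot X k) = 0)
    (w : X → ℝ) (hw : ∀ x, 0 < w x)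
    (ε τ W : ℝ) (hε0 : 0 < ε) (hε1 : ε ≤ 1) (hτ : 0 < τ) (hW : 0 < W)
    (v : KSet X k) (hgv : τ ≤ g v) (hwv : wtot w v ≤ W)
    (θ A : ℝ) (hθ : θ = ε * τ / W) (hA : A = (4 - ε) / (3 * ε) * W)
    (m : ℕ) (c : ℕ → KSet X k) (h0 : c 0 = KSet.bot X k)
    (hchain : ∀ p, p < m → ∃ (xp : X) (ip : Fin k),
      c p xp = none ∧ c (p + 1) = KSet.add (c p) xp ip ∧
        (∀ i : Fin k, marg g (c p) xp i ≤ marg g (c p) xp ip) ∧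
        θ * w xp ≤ marg g (c p) xp ip)
    (hout : ∀ y : X, v y ≠ none → c m y = none →
      ∃ p, p ≤ m ∧
        ((∀ i : Fin k, marg g (c p) y i < θ * w y) ∨
          ((∃ i : Fin k, θ * w y ≤ marg g (c p) y i) ∧ A < wtot w (c p) + w y))) :
    (1 - ε) * τ / 3 ≤ g (c m) := by
  have hc : ThresholdGreedySteps g w θ m c := hchain
  have hθ0 : 0 ≤ θ := by rw [hθ]; positivity
  have hw0 : ∀ x, 0 ≤ w x := fun x => (hw x).le
  by_cases hheavy : ∃ y, v y ≠ none ∧ ∃ p ≤ m, A < wtot w (c p) + w y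
  · obtain ⟨y, hvy, p, hpm, hAy⟩ := hheavy
    have hwy : w y ≤ W := by
      have := sum_le_wtot hw0 (S := {y}) (by simpa using hvy)
      rw [Finset.sum_singleton] at this
      linarith
    have hθAW : θ * (A - W) = 4 * (1 - ε) * τ / 3 := by
      rw [hθ, hA]; field_simp; ring
    have hwp := mul_le_mul_of_nonneg_left (show A - W ≤ wtot w (c p) by linarith) hθ0
    have hgp := hc.mul_wtot_le h0 hnorm hpm
    have hmono := hc.value_le_of_le hθ0 hw0 hpm le_rfl
    linarith [mul_nonneg (sub_nonneg.mpr hε1) hτ.le]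
  · push Not at hheavy
    have hgood : ∀ y, c m y = none → v y ≠ none → ∀ i, marg g (c m) y i ≤ θ * w y := by
      intro y hcy hvy i
      obtain ⟨p, hpm, hlow | ⟨-, hAy⟩⟩ := hout y hvy hcy
      · exact (hsub.marg_le_marg_of_le_s13 (hc.le_of_le hpm le_rfl) hcy i).trans (hlow i).le
      · exact absurd hAy (hheavy y hvy p hpm).not_gt
    have hhybrid := hc.le_overlay_add_two_mul hsub hk hθ0 hw0 v le_rfl
    rw [h0, KSet.bot_overlay, hnorm] at hhybrid
    have hrest := hsub.overlay_le_add_mul_wtot hw0 hθ0 hgood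
    have hθW : θ * W = ε * τ := by rw [hθ]; field_simp
    have := mul_le_mul_of_nonneg_left hwv hθ0
    linarith

/-- **Lemma 4, non-monotone case.** Suppose `k ≥ 2`, `g` is a
(not necessarily monotone) normalized `k`-submodular function, `w > 0`,
`ε ∈ (0,1]`, `τ > 0`, `W > 0`, `v` is a `k`-set with `g v ≥ τ` and `w(v) ≤ W`,
`θ = ετ/W`, `A = ((4-ε)/(3ε))·W`, and the ground set contains no big element.
If `𝟎 = x⁰ ⊑ … ⊑ xᵐ = 𝐱` is a greedy chain in which every added pair passes
the threshold `Δ_{x_p,i_p}g(xᵖ⁻¹) ≥ θ·w(x_p)`, and every `y ∈ E(v) \ E(𝐱)` has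
an index `p_y ≤ m` at which `y` is good or bad, then `g 𝐱 ≥ (1-ε)τ/3`. -/
theorem lemma4_nonmonotone {X : Type*} [Fintype X] [DecidableEq X] {k : ℕ} (hk : 2 ≤ k)
    (g : KSet X k → ℝ) (hnn : ∀ s : KSet X k, 0 ≤ g s) (hsub : KSubmodular g)
    (hnorm : g (KSet.bot X k) = 0)
    (w : X → ℝ) (hw : ∀ x, 0 < w x)
    (ε τ W : ℝ) (hε0 : 0 < ε) (hε1 : ε ≤ 1) (hτ : 0 < τ) (hW : 0 < W)
    (v : KSet X k) (hgv : τ ≤ g v) (hwv : wtot w v ≤ W)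
    (θ A : ℝ) (hθ : θ = ε * τ / W) (hA : A = (4 - ε) / (3 * ε) * W)
    (hnobig : ∀ x : X, w x ≤ A → ∀ i : Fin k, g (KSet.single x i) < τ)
    (m : ℕ) (c : ℕ → KSet X k) (h0 : c 0 = KSet.bot X k)
    (hchain : ∀ p, p < m → ∃ (xp : X) (ip : Fin k),
      c p xp = none ∧ c (p + 1) = KSet.add (c p) xp ip ∧
        (∀ i : Fin k, marg g (c p) xp i ≤ marg g (c p) xp ip) ∧
        θ * w xp ≤ marg g (c p) xp ip)
    (hout : ∀ y : X, v y ≠ none → c m y = none →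
      ∃ p, p ≤ m ∧
        ((∀ i : Fin k, marg g (c p) y i < θ * w y) ∨
          ((∃ i : Fin k, θ * w y ≤ marg g (c p) y i) ∧ A < wtot w (c p) + w y))) :
    (1 - ε) * τ / 3 ≤ g (c m) :=
  lemma4_nonmonotone_general hk g hsub hnorm w hw ε τ W hε0 hε1 hτ hW v hgv hwv θ A hθ hA m c h0
    hchain hout
end

section
/- (Lemma 2, monotone case) Let g : (k+1)^𝒳 → ℝ≥0 be a monotone normalized k-submodular function, w : 𝒳 → ℝ>0 a positive weight function, τ > 0, W̄ > 0 and ε ∈ (0,1]. If the k-set 𝐬 returned by Algorithm 1 with inputs (τ, W̄, ε) contains a big element, then w(𝐬) ≤ ((3−ε)/(2ε))·W̄ and g(𝐬) ≥ τ. -/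
/-- A choice of position in `[k]` maximizing `f`. -/
noncomputable def argmaxFin {k : ℕ} [NeZero k] (f : Fin k → ℝ) : Fin k :=
  Classical.choose (Finset.exists_max_image Finset.univ f
    ⟨⟨0, Nat.pos_of_ne_zero (NeZero.ne k)⟩, Finset.mem_univ _⟩)

open Classical in
/-- One step of Algorithm 1, processing the arriving element `x` with current
solution `s`, threshold `τ`, density threshold `θ` and cost upper bound `A`:
if `x` is big (`w x ≤ A` and `max_i g((x,i)) ≥ τ`) then restart from `(x,i')`
with `i'` maximizing `g((x,i))`; otherwise add `(x,i')` with `i'` maximizing the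
marginal gain, provided `Δ_{x,i'}g(s)/w(x) ≥ θ` and `w(s) + w(x) ≤ A`. -/
noncomputable def alg1Step {X : Type*} [Fintype X] [DecidableEq X] {k : ℕ} [NeZero k]
    (g : KSet X k → ℝ) (w : X → ℝ) (τ θ A : ℝ) (s : KSet X k) (x : X) : KSet X k :=
  if w x ≤ A ∧ τ ≤ g (KSet.single x (argmaxFin fun i => g (KSet.single x i))) then
    KSet.single x (argmaxFin fun i => g (KSet.single x i))
  else if θ ≤ marg g s x (argmaxFin fun i => marg g s x i) / w x ∧ wtot w s + w x ≤ A then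
    KSet.add s x (argmaxFin fun i => marg g s x i)
  else s

/-- Algorithm 1: starting from `𝟎`, process the elements of the ground set in
their arrival order `order`. -/
noncomputable def alg1 {X : Type*} [Fintype X] [DecidableEq X] {k : ℕ} [NeZero k]
    (g : KSet X k → ℝ) (w : X → ℝ) (τ θ A : ℝ) (order : List X) : KSet X k :=
  order.foldl (alg1Step g w τ θ A) (KSet.bot X k)

/-- `x` is a big element: `w x ≤ A` and `max_{i ∈ [k]} g((x,i)) ≥ τ`. -/
def IsBig {X : Type*} [DecidableEq X] {k : ℕ} (g : KSet X k → ℝ) (w : X → ℝ)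
    (τ A : ℝ) (x : X) : Prop :=
  w x ≤ A ∧ ∃ i : Fin k, τ ≤ g (KSet.single x i)

/-!
Each step of Algorithm 1 preserves both `w(𝐬) ≤ A` and `g(𝐬) ≥ τ`: a restart replaces `𝐬` by
a single element of weight at most `A` and value at least `τ`, an element is added only if the
weight stays at most `A` and its marginal gain is at least `θ·w(x) ≥ 0`, and otherwise `𝐬` is
unchanged. The big element forces a restart when it arrives, so both bounds hold from then on.
-/

theorem List.foldl_induction {α β : Type*} (f : β → α → β) (p : β → Prop)
    (hf : ∀ b a, p b → p (f b a)) (l : List α) {b : β} (hb : p b) : p (l.foldl f b) := by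
  induction l generalizing b with
  | nil => exact hb
  | cons a l ih => exact ih (hf b a hb)

lemma le_apply_argmaxFin {k : ℕ} [NeZero k] (f : Fin k → ℝ) (i : Fin k) :
    f i ≤ f (argmaxFin f) :=
  (Classical.choose_spec (Finset.exists_max_image Finset.univ f
    ⟨⟨0, Nat.pos_of_ne_zero (NeZero.ne k)⟩, Finset.mem_univ _⟩)).2 i (Finset.mem_univ i)

section Weight

variable {X : Type*} [Fintype X] [DecidableEq X] {k : ℕ}

lemma wtot_single (w : X → ℝ) (x : X) (i : Fin k) : wtot w (KSet.single x i) = w x := by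
  have hsupp : Finset.univ.filter (fun y => KSet.single x i y ≠ none) = {x} := by
    ext y
    simp [KSet.single]
  rw [wtot, hsupp, Finset.sum_singleton]

lemma wtot_add_le (w : X → ℝ) (hw : ∀ x, 0 ≤ w x) (s : KSet X k) (x : X) (i : Fin k) :
    wtot w (KSet.add s x i) ≤ wtot w s + w x := by
  set supp := Finset.univ.filter (fun y => s y ≠ none)
  have hsupp : Finset.univ.filter (fun y => KSet.add s x i y ≠ none) ⊆ insert x supp := by
    intro y hy
    rw [Finset.mem_insert, Finset.mem_filter]
    by_cases hyx : y = x
    · exact .inl hyx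
    · refine .inr ⟨Finset.mem_univ y, ?_⟩
      simpa [KSet.add, Function.update_of_ne hyx] using (Finset.mem_filter.mp hy).2
  have hs : wtot w s = ∑ y ∈ supp, w y := rfl
  calc wtot w (KSet.add s x i) ≤ ∑ y ∈ insert x supp, w y :=
        Finset.sum_le_sum_of_subset_of_nonneg hsupp fun _ _ _ => hw _
    _ ≤ wtot w s + w x := by
        by_cases hx : x ∈ supp
        · rw [Finset.insert_eq_of_mem hx, hs]
          linarith [hw x]
        · rw [Finset.sum_insert hx, hs, add_comm]

end Weight

section Step

variable {X : Type*} [Fintype X] [DecidableEq X] {k : ℕ} [NeZero k]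
  (g : KSet X k → ℝ) (w : X → ℝ) (τ θ A : ℝ)

lemma wtot_alg1Step_le (hw : ∀ x, 0 ≤ w x) {s : KSet X k} (hs : wtot w s ≤ A) (x : X) :
    wtot w (alg1Step g w τ θ A s x) ≤ A := by
  unfold alg1Step
  split_ifs with hbig hadd
  · rw [wtot_single]
    exact hbig.1
  · exact (wtot_add_le w hw s x _).trans hadd.2
  · exact hs

lemma le_apply_alg1Step (hθ : 0 ≤ θ) (hw : ∀ x, 0 < w x) {s : KSet X k} (hs : τ ≤ g s)
    (x : X) : τ ≤ g (alg1Step g w τ θ A s x) := by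
  unfold alg1Step
  split_ifs with hbig hadd
  · exact hbig.2
  · have hgain : θ * w x ≤ g (KSet.add s x (argmaxFin fun i => marg g s x i)) - g s :=
      (le_div_iff₀ (hw x)).mp hadd.1
    linarith [mul_nonneg hθ (hw x).le]
  · exact hs

lemma alg1Step_bounds (hθ : 0 ≤ θ) (hw : ∀ x, 0 < w x) {s : KSet X k}
    (hs : wtot w s ≤ A ∧ τ ≤ g s) (x : X) :
    wtot w (alg1Step g w τ θ A s x) ≤ A ∧ τ ≤ g (alg1Step g w τ θ A s x) :=
  ⟨wtot_alg1Step_le g w τ θ A (fun y => (hw y).le) hs.1 x,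
    le_apply_alg1Step g w τ θ A hθ hw hs.2 x⟩

lemma alg1Step_bounds_of_isBig {x : X} (hx : IsBig g w τ A x) (s : KSet X k) :
    wtot w (alg1Step g w τ θ A s x) ≤ A ∧ τ ≤ g (alg1Step g w τ θ A s x) := by
  obtain ⟨hwx, i, hi⟩ := hx
  have hτ := hi.trans (le_apply_argmaxFin (fun i => g (KSet.single x i)) i)
  rw [alg1Step, if_pos ⟨hwx, hτ⟩, wtot_single]
  exact ⟨hwx, hτ⟩

lemma alg1_append_cons (l₁ l₂ : List X) (x : X) :
    alg1 g w τ θ A (l₁ ++ x :: l₂) =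
      l₂.foldl (alg1Step g w τ θ A) (alg1Step g w τ θ A (alg1 g w τ θ A l₁) x) := by
  rw [alg1, List.foldl_append, List.foldl_cons, alg1]

end Step

theorem lemma2_monotone_general {X : Type*} [Fintype X] [DecidableEq X] {k : ℕ} [NeZero k]
    (g : KSet X k → ℝ)
    (w : X → ℝ) (hw : ∀ x, 0 < w x)
    (τ Wbar ε : ℝ) (hτ : 0 < τ) (hW : 0 < Wbar) (hε0 : 0 < ε)
    (order : List X) (hfull : ∀ x : X, x ∈ order)
    (hbig : ∃ x : X,
      alg1 g w τ (ε * τ / Wbar) ((3 - ε) / (2 * ε) * Wbar) order x ≠ none ∧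
      IsBig g w τ ((3 - ε) / (2 * ε) * Wbar) x) :
    wtot w (alg1 g w τ (ε * τ / Wbar) ((3 - ε) / (2 * ε) * Wbar) order) ≤
        (3 - ε) / (2 * ε) * Wbar ∧
      τ ≤ g (alg1 g w τ (ε * τ / Wbar) ((3 - ε) / (2 * ε) * Wbar) order) := by
  obtain ⟨x, -, hxbig⟩ := hbig
  obtain ⟨before, after, rfl⟩ := List.append_of_mem (hfull x)
  set A := (3 - ε) / (2 * ε) * Wbar
  have hθ : 0 ≤ ε * τ / Wbar := by positivity
  rw [alg1_append_cons]
  exact after.foldl_induction _ (fun s => wtot w s ≤ A ∧ τ ≤ g s)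
    (fun s y hs => alg1Step_bounds g w τ _ A hθ hw hs y)
    (alg1Step_bounds_of_isBig g w τ _ A hxbig _)

/-- **Lemma 2, monotone case.** If the output of Algorithm 1
(with inputs `τ`, `W̄`, `ε`, hence `θ = ετ/W̄` and `A = ((3-ε)/(2ε))·W̄` in the
monotone case) contains a big element, then `w(𝐬) ≤ ((3-ε)/(2ε))·W̄` and
`g 𝐬 ≥ τ`. -/
theorem lemma2_monotone {X : Type*} [Fintype X] [DecidableEq X] {k : ℕ} [NeZero k]
    (g : KSet X k → ℝ) (hnn : ∀ s : KSet X k, 0 ≤ g s) (hsub : KSubmodular g)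
    (hmono : KMonotone g) (hnorm : g (KSet.bot X k) = 0)
    (w : X → ℝ) (hw : ∀ x, 0 < w x)
    (τ Wbar ε : ℝ) (hτ : 0 < τ) (hW : 0 < Wbar) (hε0 : 0 < ε) (hε1 : ε ≤ 1)
    (order : List X) (hnodup : order.Nodup) (hfull : ∀ x : X, x ∈ order)
    (hbig : ∃ x : X,
      alg1 g w τ (ε * τ / Wbar) ((3 - ε) / (2 * ε) * Wbar) order x ≠ none ∧
      IsBig g w τ ((3 - ε) / (2 * ε) * Wbar) x) :
    wtot w (alg1 g w τ (ε * τ / Wbar) ((3 - ε) / (2 * ε) * Wbar) order) ≤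
        (3 - ε) / (2 * ε) * Wbar ∧
      τ ≤ g (alg1 g w τ (ε * τ / Wbar) ((3 - ε) / (2 * ε) * Wbar) order) :=
  lemma2_monotone_general g w hw τ Wbar ε hτ hW hε0 order hfull hbig
end
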